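/- arXiv:1803.04726 — 3 statements merged into one kernel-verified Lean document; each statement's English description precedes it below -/
import Mathlib

section
/- Let X, Y be Hilbert spaces and P̃ : X → Y a bounded linear operator with closed range. Let R : X → ℝ ∪ {∞} and f_ref ∈ X satisfy R(f_ref + P̃*(p) + f₀) ≥ R(f_ref + P̃*(p)) for all p ∈ Y and all f₀ ∈ ker(P̃). Let S̃ : Y → ℝ ∪ {∞} be any functional. If f_new minimizes f ↦ S̃(P̃(f)) + R(f) over X, then there exists Δp ∈ Y minimizing p ↦ S̃(P̃(f_ref) + P̃ P̃*(p)) + R(f_ref + P̃*(p)) over Y, and f̃_new := f_ref + P̃*(Δp) also minimizes f ↦ S̃(P̃(f)) + R(f) over X. -/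
/-!
Since `P̃` has closed range, it restricts to an isomorphism from `(ker P̃)ᗮ` onto `ran P̃`
(open mapping theorem). Composing its inverse with `⟪g, ·⟫` and the projection onto `ran P̃`,
the Riesz representation theorem shows that every `g ∈ (ker P̃)ᗮ` lies in `ran P̃*`.
Hence `f_new - f_ref = P̃* Δp + f₀` with `P̃ f₀ = 0`: the point `f_ref + P̃* Δp` has the same
data term as `f_new` and, by the hypothesis on `R`, no larger regulariser, so it is again a
minimizer, a fortiori over the affine subspace `f_ref + ran P̃*`.
-/

open ContinuousLinearMap
open scoped InnerProductSpace

namespace ContinuousLinearMap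

variable {𝕜 X Y : Type*} [RCLike 𝕜] [NormedAddCommGroup X] [InnerProductSpace 𝕜 X]
  [NormedAddCommGroup Y] [InnerProductSpace 𝕜 Y] (P : X →L[𝕜] Y)

theorem injective_comp_subtypeL_orthogonal_ker : Function.Injective (P ∘L P.kerᗮ.subtypeL) :=
  (injective_iff_map_eq_zero _).mpr fun g hg ↦
    Subtype.ext <| P.ker.inf_orthogonal_eq_bot.le ⟨hg, g.2⟩

variable [CompleteSpace X]

theorem exists_mem_orthogonal_ker_apply_eq (x : X) : ∃ g ∈ P.kerᗮ, P g = P x :=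
  ⟨x - P.ker.starProjection x, P.ker.sub_starProjection_mem_orthogonal x, by
    rw [map_sub, show P (P.ker.starProjection x) = 0 from P.ker.starProjection_apply_mem x, sub_zero]⟩

theorem range_comp_subtypeL_orthogonal_ker : Set.range (P ∘L P.kerᗮ.subtypeL) = Set.range P := by
  refine (Set.range_comp_subset_range (P.kerᗮ.subtypeL) P).antisymm ?_
  rintro _ ⟨x, rfl⟩
  obtain ⟨g, hg, hPg⟩ := P.exists_mem_orthogonal_ker_apply_eq x
  exact ⟨⟨g, hg⟩, hPg⟩

variable [CompleteSpace Y]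

theorem orthogonal_ker_le_range_adjoint (hP : IsClosed (Set.range P)) :
    P.kerᗮ ≤ (adjoint P).range := by
  intro g hg
  set A := P ∘L P.kerᗮ.subtypeL
  have hA : IsClosed (Set.range A) := P.range_comp_subtypeL_orthogonal_ker.symm ▸ hP
  have : CompleteSpace A.range := hA.completeSpace_coe
  set e := A.equivRange P.injective_comp_subtypeL_orthogonal_ker hA
  let ψ : StrongDual 𝕜 Y := innerSL 𝕜 g ∘L P.kerᗮ.subtypeL ∘L (e.symm : A.range →L[𝕜] P.kerᗮ) ∘L
    A.range.orthogonalProjectionOnto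
  refine ⟨(InnerProductSpace.toDual 𝕜 Y).symm ψ, ext_inner_right 𝕜 fun x ↦ ?_⟩
  obtain ⟨w, hw, hPw⟩ := P.exists_mem_orthogonal_ker_apply_eq x
  have hPx : P x ∈ A.range := ⟨⟨w, hw⟩, hPw⟩
  have hew : e.symm ⟨P x, hPx⟩ = ⟨w, hw⟩ := e.symm_apply_eq.mpr <| Subtype.ext hPw.symm
  have hwx : w - x ∈ P.ker := show P (w - x) = 0 by rw [map_sub, hPw, sub_self]
  rw [coe_coe, adjoint_inner_left, InnerProductSpace.toDual_symm_apply]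
  calc ψ (P x) = ⟪g, w⟫_𝕜 := by
        simp only [ψ, comp_apply, A.range.orthogonalProjectionOnto_mem_subspace_eq_self ⟨P x, hPx⟩,
          ContinuousLinearEquiv.coe_coe, hew, Submodule.coe_subtypeL, Submodule.subtype_apply,
          coe_innerSL_apply]
    _ = ⟪g, x⟫_𝕜 := by
        rw [← sub_eq_zero, ← inner_sub_right]
        exact Submodule.inner_left_of_mem_orthogonal hwx hg

theorem exists_apply_adjoint_eq (hP : IsClosed (Set.range P)) (x : X) :
    ∃ q : Y, P (adjoint P q) = P x := by
  obtain ⟨g, hg, hPg⟩ := P.exists_mem_orthogonal_ker_apply_eq x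
  obtain ⟨q, hq⟩ := P.orthogonal_ker_le_range_adjoint hP hg
  exact ⟨q, hq ▸ hPg⟩

end ContinuousLinearMap

theorem forall_comp_add_le_of_apply_eq_of_le {X Y β : Type*} [Add β] [Preorder β] [AddLeftMono β]
    {P : X → Y} {S : Y → β} {R : X → β} {f f_new : X}
    (hmin : ∀ g, S (P f_new) + R f_new ≤ S (P g) + R g) (hP : P f = P f_new) (hR : R f ≤ R f_new) :
    ∀ g, S (P f) + R f ≤ S (P g) + R g := fun g ↦
  calc S (P f) + R f ≤ S (P f_new) + R f_new := hP ▸ add_le_add_right hR _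
    _ ≤ S (P g) + R g := hmin g

/-- Generalized SART principle (existence direction): if `f_new` minimizes
`f ↦ S̃(P̃ f) + R f`, then there is `Δp` minimizing the projection-space functional
and `f_ref + P̃* Δp` also minimizes the original functional. -/
theorem stmt0
    {X Y : Type*} [NormedAddCommGroup X] [InnerProductSpace ℝ X] [CompleteSpace X]
    [NormedAddCommGroup Y] [InnerProductSpace ℝ Y] [CompleteSpace Y]
    (P : X →L[ℝ] Y) (hclosed : IsClosed (Set.range P))
    (R : X → EReal) (S : Y → EReal) (f_ref : X)
    (hadm : ∀ (p : Y) (f₀ : X), P f₀ = 0 →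
      R (f_ref + (adjoint P) p + f₀) ≥ R (f_ref + (adjoint P) p))
    (f_new : X) (hmin : ∀ f : X, S (P f_new) + R f_new ≤ S (P f) + R f) :
    ∃ Δp : Y,
      (∀ p : Y,
        S (P f_ref + P ((adjoint P) Δp)) + R (f_ref + (adjoint P) Δp)
          ≤ S (P f_ref + P ((adjoint P) p)) + R (f_ref + (adjoint P) p)) ∧
      (∀ f : X,
        S (P (f_ref + (adjoint P) Δp)) + R (f_ref + (adjoint P) Δp) ≤ S (P f) + R f) := by
  obtain ⟨Δp, hΔp⟩ := P.exists_apply_adjoint_eq hclosed (f_new - f_ref)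
  have hP : P (f_ref + adjoint P Δp) = P f_new := by
    rw [map_add, hΔp, map_sub, add_sub_cancel]
  have hR : R (f_ref + adjoint P Δp) ≤ R f_new := by
    simpa using hadm Δp (f_new - (f_ref + adjoint P Δp)) (by rw [map_sub, hP, sub_self])
  have hopt := forall_comp_add_le_of_apply_eq_of_le hmin hP hR
  refine ⟨Δp, fun p ↦ ?_, hopt⟩
  simpa only [map_add] using hopt (f_ref + adjoint P p)
end

section
/- Let X, Y be Hilbert spaces, A : X → Y bounded linear with A A* = D for some bounded self-adjoint operator D ≥ 0 on Y, let α > 0 and g ∈ Y, f₀ ∈ X. Then the unique minimizer of f ↦ ‖A f − g‖² + α‖f − f₀‖² is f_new = f₀ + A*(D + α·id)⁻¹(g − A f₀). -/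
open ContinuousLinearMap
open scoped RealInnerProductSpace

/-! At a point `fs` satisfying the normal equation `A* (A fs - g) + α (fs - f₀) = 0` the cross
terms cancel, so `J f = J fs + ‖A (f - fs)‖² + α ‖f - fs‖²` and `fs` is the unique minimizer.
For `fs = f₀ + A* q` with `(A A* + α) q = g - A f₀` the residual is `A fs - g = -α q`, which is
exactly the normal equation; such a `q` exists uniquely by Lax–Milgram, as `D + α` is coercive
when `D ≥ 0`. -/

section Coercive

variable {V : Type*} [NormedAddCommGroup V] [InnerProductSpace ℝ V]

theorem isCoercive_innerSL_comp_add_smul_id {D : V →L[ℝ] V} (hD : ∀ v, 0 ≤ ⟪D v, v⟫)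
    {α : ℝ} (hα : 0 < α) :
    IsCoercive ((innerSL ℝ).comp (D + α • ContinuousLinearMap.id ℝ V)) := by
  refine ⟨α, hα, fun v => ?_⟩
  simp only [comp_apply, innerSL_apply_apply, add_apply, smul_apply,
    id_apply, inner_add_left, real_inner_smul_left, real_inner_self_eq_norm_mul_norm]
  linarith [hD v]

theorem IsCoercive.bijective_of_innerSL_comp [CompleteSpace V] {T : V →L[ℝ] V}
    (hT : IsCoercive ((innerSL ℝ).comp T)) : Function.Bijective T := by
  have hequiv : ⇑hT.continuousLinearEquivOfBilin = T :=
    funext fun v => ext_inner_right ℝ fun w => by simp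
  exact hequiv ▸ hT.continuousLinearEquivOfBilin.bijective

end Coercive

section Tikhonov

variable {X Y : Type*} [NormedAddCommGroup X] [InnerProductSpace ℝ X] [CompleteSpace X]
  [NormedAddCommGroup Y] [InnerProductSpace ℝ Y] [CompleteSpace Y]
  (A : X →L[ℝ] Y) (g : Y) (f₀ : X) (α : ℝ)

def tikhonovFunctional (f : X) : ℝ := ‖A f - g‖ ^ 2 + α * ‖f - f₀‖ ^ 2

variable {A g f₀ α} {fs : X}

theorem tikhonovFunctional_eq_add_of_normalEq
    (hfs : adjoint A (A fs - g) + α • (fs - f₀) = 0) (f : X) :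
    tikhonovFunctional A g f₀ α f =
      tikhonovFunctional A g f₀ α fs + (‖A (f - fs)‖ ^ 2 + α * ‖f - fs‖ ^ 2) := by
  have hcross : ⟪A fs - g, A (f - fs)⟫ + α * ⟪fs - f₀, f - fs⟫ = 0 := by
    rw [← adjoint_inner_left, ← real_inner_smul_left, ← inner_add_left, hfs, inner_zero_left]
  have hres : A f - g = (A fs - g) + A (f - fs) := by rw [map_sub]; abel
  have hdev : f - f₀ = (fs - f₀) + (f - fs) := by abel
  rw [tikhonovFunctional, tikhonovFunctional, hres, hdev, norm_add_sq_real, norm_add_sq_real]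
  linear_combination 2 * hcross

theorem tikhonovFunctional_le_of_normalEq
    (hfs : adjoint A (A fs - g) + α • (fs - f₀) = 0) (hα : 0 ≤ α) (f : X) :
    tikhonovFunctional A g f₀ α fs ≤ tikhonovFunctional A g f₀ α f := by
  rw [tikhonovFunctional_eq_add_of_normalEq hfs f]
  exact le_add_of_nonneg_right (by positivity)

theorem eq_of_tikhonovFunctional_le_of_normalEq
    (hfs : adjoint A (A fs - g) + α • (fs - f₀) = 0) (hα : 0 < α) {f : X}
    (hf : tikhonovFunctional A g f₀ α f ≤ tikhonovFunctional A g f₀ α fs) : f = fs := by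
  rw [tikhonovFunctional_eq_add_of_normalEq hfs f] at hf
  by_contra hne
  have hpos : 0 < ‖f - fs‖ := norm_pos_iff.mpr (sub_ne_zero.mpr hne)
  nlinarith [sq_nonneg ‖A (f - fs)‖, mul_pos hα (pow_pos hpos 2)]

theorem normalEq_of_comp_adjoint_add_smul_id_apply_eq {D : Y →L[ℝ] Y}
    (hD : A.comp (adjoint A) = D) {q : Y}
    (hq : (D + α • ContinuousLinearMap.id ℝ Y) q = g - A f₀) :
    adjoint A (A (f₀ + adjoint A q) - g) + α • ((f₀ + adjoint A q) - f₀) = 0 := by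
  subst hD
  have hres : A (f₀ + adjoint A q) - g = -(α • q) := by
    simp only [add_apply, comp_apply, smul_apply, id_apply] at hq
    rw [map_add]
    linear_combination (norm := module) hq
  rw [hres, add_sub_cancel_left, map_neg, map_smul, neg_add_cancel]

end Tikhonov

theorem stmt6_general
    {X Y : Type*} [NormedAddCommGroup X] [InnerProductSpace ℝ X] [CompleteSpace X]
    [NormedAddCommGroup Y] [InnerProductSpace ℝ Y] [CompleteSpace Y]
    (A : X →L[ℝ] Y) (D : Y →L[ℝ] Y)
    (hD : A.comp (adjoint A) = D)
    (hpos : ∀ y : Y, (0 : ℝ) ≤ inner ℝ (D y) y)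
    (α : ℝ) (hα : 0 < α) (g : Y) (f₀ : X) :
    (∃! q : Y, (D + α • ContinuousLinearMap.id ℝ Y) q = g - A f₀) ∧
    ∀ q : Y, (D + α • ContinuousLinearMap.id ℝ Y) q = g - A f₀ →
      (∀ f : X,
        ‖A (f₀ + (adjoint A) q) - g‖ ^ 2 + α * ‖(f₀ + (adjoint A) q) - f₀‖ ^ 2
          ≤ ‖A f - g‖ ^ 2 + α * ‖f - f₀‖ ^ 2) ∧
      (∀ f : X,
        (∀ f' : X, ‖A f - g‖ ^ 2 + α * ‖f - f₀‖ ^ 2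
            ≤ ‖A f' - g‖ ^ 2 + α * ‖f' - f₀‖ ^ 2) →
        f = f₀ + (adjoint A) q) := by
  have hbij := (isCoercive_innerSL_comp_add_smul_id hpos hα).bijective_of_innerSL_comp
  refine ⟨hbij.existsUnique _, fun q hq => ?_⟩
  have hnormal := normalEq_of_comp_adjoint_add_smul_id_apply_eq hD hq
  exact ⟨tikhonovFunctional_le_of_normalEq hnormal hα.le,
    fun f hf => eq_of_tikhonovFunctional_le_of_normalEq hnormal hα (hf _)⟩

/-- Abstract SART formula: if `A A* = D` with `D` self-adjoint and nonnegative,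
the unique minimizer of `f ↦ ‖A f − g‖² + α‖f − f₀‖²` is
`f₀ + A*(D + α·id)⁻¹(g − A f₀)`, the inverse being expressed via the unique
solution `q` of `(D + α·id) q = g − A f₀`. -/
theorem stmt6
    {X Y : Type*} [NormedAddCommGroup X] [InnerProductSpace ℝ X] [CompleteSpace X]
    [NormedAddCommGroup Y] [InnerProductSpace ℝ Y] [CompleteSpace Y]
    (A : X →L[ℝ] Y) (D : Y →L[ℝ] Y)
    (hD : A.comp (adjoint A) = D) (hsa : IsSelfAdjoint D)
    (hpos : ∀ y : Y, (0 : ℝ) ≤ inner ℝ (D y) y)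
    (α : ℝ) (hα : 0 < α) (g : Y) (f₀ : X) :
    (∃! q : Y, (D + α • ContinuousLinearMap.id ℝ Y) q = g - A f₀) ∧
    ∀ q : Y, (D + α • ContinuousLinearMap.id ℝ Y) q = g - A f₀ →
      (∀ f : X,
        ‖A (f₀ + (adjoint A) q) - g‖ ^ 2 + α * ‖(f₀ + (adjoint A) q) - f₀‖ ^ 2
          ≤ ‖A f - g‖ ^ 2 + α * ‖f - f₀‖ ^ 2) ∧
      (∀ f : X,
        (∀ f' : X, ‖A f - g‖ ^ 2 + α * ‖f - f₀‖ ^ 2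
            ≤ ‖A f' - g‖ ^ 2 + α * ‖f' - f₀‖ ^ 2) →
        f = f₀ + (adjoint A) q) :=
  stmt6_general A D hD hpos α hα g f₀
end

section
/- Let Ω ⊆ ℝ³ be bounded open with 0 ∉ closure(Ω), 𝒟 the cone-beam projector from the origin, w(x)=|x|⁻², ũ = 𝒟(w), and 𝒟^B(p)(x) = p(x/|x|)1_Ω(x) the back-projection. Then p ↦ w·𝒟^B(ũ^{-1/2}·p) is an isometry from L²(D) to L²(Ω), where D = {φ ∈ 𝕊² : ũ(φ) > 0}: ‖w·𝒟^B(ũ^{-1/2}p)‖²_{L²(Ω)} = ‖p‖²_{L²(D)}. -/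
/-!
In polar coordinates `x = t • φ` (`t > 0`, `φ` on the unit sphere) the volume element is
`t² dt dφ`. Both `p` and `ũ` are constant along rays, so on the ray through `φ` the integrand,
multiplied by `t²`, is `p(φ)² / ũ(φ) · 1_Ω(t • φ) t⁻²`; its integral over `t` is
`p(φ)² / ũ(φ) · ũ(φ) = p(φ)²`, and where `ũ(φ) = 0` also `p(φ) = 0`.
-/

open MeasureTheory Set Metric

theorem pow_mul_sq_inv_pow_mul (n : ℕ) (r a : ℝ) :
    r ^ n * ((r ^ n)⁻¹ * a) ^ 2 = a ^ 2 * (r ^ n)⁻¹ := by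
  rcases eq_or_ne (r ^ n) 0 with h | h
  · simp [h]
  · field_simp

section Ray

variable {E : Type*} [NormedAddCommGroup E] [NormedSpace ℝ E]

/-- The cone-beam projection `𝒟 f` from the origin, in the direction `φ`. -/
noncomputable def rayTransform (f : E → ℝ) (φ : E) : ℝ := ∫ t in Ioi (0 : ℝ), f (t • φ)

theorem rayTransform_nonneg {f : E → ℝ} (hf : 0 ≤ f) (φ : E) : 0 ≤ rayTransform f φ :=
  integral_nonneg fun _ => hf _

theorem lintegral_Ioi_pow_mul_sq_indicator_div_sqrt_rayTransform {n : ℕ} {Ω : Set E}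
    {φ : E} (hφ : ‖φ‖ = 1) {h : E → ℝ} {a : ℝ}
    (hh : ∀ t : ℝ, 0 < t →
      h (t • φ) = a / √(rayTransform (Ω.indicator fun y => (‖y‖ ^ n)⁻¹) φ))
    (ha : rayTransform (Ω.indicator fun y => (‖y‖ ^ n)⁻¹) φ = 0 → a = 0) :
    ∫⁻ t in Ioi (0 : ℝ), ENNReal.ofReal (t ^ n) *
      ENNReal.ofReal (((‖t • φ‖ ^ n)⁻¹ * Ω.indicator h (t • φ)) ^ 2) = ENNReal.ofReal (a ^ 2) := by
  set w : E → ℝ := Ω.indicator fun y => (‖y‖ ^ n)⁻¹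
  set b := rayTransform w φ
  have hw : 0 ≤ w := indicator_nonneg fun _ _ => by positivity
  have hb : 0 ≤ b := rayTransform_nonneg hw φ
  have key : ∀ t ∈ Ioi (0 : ℝ), ENNReal.ofReal (t ^ n) *
      ENNReal.ofReal (((‖t • φ‖ ^ n)⁻¹ * Ω.indicator h (t • φ)) ^ 2) =
        ENNReal.ofReal (a ^ 2 / b) * ENNReal.ofReal (w (t • φ)) := by
    intro t (ht : 0 < t)
    have hnorm : ‖t • φ‖ = t := by rw [norm_smul, hφ, mul_one, Real.norm_of_nonneg ht.le]
    rw [← ENNReal.ofReal_mul (by positivity), ← ENNReal.ofReal_mul (by positivity)]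
    by_cases hmem : t • φ ∈ Ω
    · rw [indicator_of_mem hmem, hh t ht, hnorm, pow_mul_sq_inv_pow_mul, div_pow,
        Real.sq_sqrt hb]
      simp [w, indicator_of_mem hmem, hnorm]
    · simp [w, indicator_of_notMem hmem]
  rw [setLIntegral_congr_fun measurableSet_Ioi key, lintegral_const_mul' _ _ ENNReal.ofReal_ne_top]
  rcases hb.eq_or_lt with hb0 | hbpos
  · simp [ha hb0.symm]
  · rw [← ofReal_integral_eq_lintegral_ofReal (.of_integral_ne_zero hbpos.ne')
      (.of_forall fun t => hw _), ← ENNReal.ofReal_mul (by positivity)]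
    exact congrArg ENNReal.ofReal (div_mul_cancel₀ _ hbpos.ne')

variable [MeasurableSpace E] [BorelSpace E]

theorem measurable_rayTransform [SecondCountableTopology E] {f : E → ℝ} (hf : Measurable f) :
    Measurable (rayTransform f) :=
  (hf.comp (measurable_snd.smul measurable_fst)).stronglyMeasurable.integral_prod_right'.measurable

theorem lintegral_eq_lintegral_toSphere_lintegral_Ioi [Nontrivial E] [FiniteDimensional ℝ E]
    (μ : Measure E) [μ.IsAddHaarMeasure] {f : E → ENNReal} (hf : Measurable f) :
    ∫⁻ x, f x ∂μ = ∫⁻ φ : sphere (0 : E) 1, (∫⁻ t in Ioi (0 : ℝ),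
      ENNReal.ofReal (t ^ (Module.finrank ℝ E - 1)) * f (t • (φ : E))) ∂μ.toSphere := by
  set g : sphere (0 : E) 1 × Ioi (0 : ℝ) → ENNReal := fun z => f (z.2.1 • (z.1 : E))
  have hg : Measurable g := hf.comp (by fun_prop)
  calc ∫⁻ x, f x ∂μ = ∫⁻ x : ({0}ᶜ : Set E), f x ∂μ.comap (↑) := by
        rw [lintegral_subtype_comap (measurableSet_singleton 0).compl, restrict_compl_singleton]
    _ = ∫⁻ x : ({0}ᶜ : Set E), g (homeomorphUnitSphereProd E x) ∂μ.comap (↑) := by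
        refine lintegral_congr fun x => ?_
        simp [g, smul_smul, mul_inv_cancel₀ (norm_ne_zero_iff.2 x.2)]
    _ = ∫⁻ z, g z ∂(μ.toSphere.prod (.volumeIoiPow (Module.finrank ℝ E - 1))) :=
        μ.measurePreserving_homeomorphUnitSphereProd.lintegral_comp_emb
          (Homeomorph.measurableEmbedding _) g
    _ = _ := by
        refine (lintegral_prod _ hg.aemeasurable).trans (lintegral_congr fun φ => ?_)
        exact (lintegral_withDensity_eq_lintegral_mul _ (by fun_prop)
          (hg.comp measurable_prodMk_left)).trans (lintegral_subtype_comap measurableSet_Ioi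
            fun t => ENNReal.ofReal (t ^ (Module.finrank ℝ E - 1)) * f (t • (φ : E)))

end Ray

theorem stmt11_general
    (Ω : Set (EuclideanSpace ℝ (Fin 3))) (hΩm : MeasurableSet Ω)
    (u : EuclideanSpace ℝ (Fin 3) → ℝ)
    (hu : ∀ x : EuclideanSpace ℝ (Fin 3), ‖x‖ = 1 →
      u x = ∫ t in Set.Ioi (0 : ℝ),
        Set.indicator Ω (fun y : EuclideanSpace ℝ (Fin 3) => (‖y‖ ^ 2)⁻¹) (t • x))
    (huhom : ∀ c : ℝ, 0 < c → ∀ x, u (c • x) = u x)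
    (p : EuclideanSpace ℝ (Fin 3) → ℝ) (hpm : Measurable p)
    (hphom : ∀ c : ℝ, 0 < c → ∀ x, p (c • x) = p x)
    (hsupp : ∀ x, u x = 0 → p x = 0) :
    (∫ x : EuclideanSpace ℝ (Fin 3),
        ((‖x‖ ^ 2)⁻¹ *
          Set.indicator Ω (fun y => p y / Real.sqrt (u y)) x) ^ 2 ∂volume)
      = ∫ φ : Metric.sphere (0 : EuclideanSpace ℝ (Fin 3)) 1, (p ↑φ) ^ 2
          ∂((volume : Measure (EuclideanSpace ℝ (Fin 3))).toSphere) := by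
  set w : EuclideanSpace ℝ (Fin 3) → ℝ := Ω.indicator fun y => (‖y‖ ^ 2)⁻¹
  -- `u` is not assumed measurable; off the origin it agrees with the measurable `U`.
  set U : EuclideanSpace ℝ (Fin 3) → ℝ := fun x => rayTransform w (‖x‖⁻¹ • x)
  have hUm : Measurable U :=
    (measurable_rayTransform ((by fun_prop : Measurable fun y : EuclideanSpace ℝ (Fin 3) =>
      (‖y‖ ^ 2)⁻¹).indicator hΩm)).comp (by fun_prop)
  have hU_smul : ∀ φ : EuclideanSpace ℝ (Fin 3), ‖φ‖ = 1 → ∀ t : ℝ, 0 < t →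
      U (t • φ) = rayTransform w φ := by
    intro φ hφ t ht
    simp [U, norm_smul, hφ, abs_of_pos ht, smul_smul, ht.ne']
  have huU : ∀ x, x ≠ 0 → u x = U x := by
    intro x hx
    rw [← huhom _ (inv_pos.2 (norm_pos_iff.2 hx)) x, hu _ (by simp [norm_smul, hx])]
    rfl
  set F : EuclideanSpace ℝ (Fin 3) → ℝ :=
    fun x => ((‖x‖ ^ 2)⁻¹ * Ω.indicator (fun y => p y / √(U y)) x) ^ 2
  have hFm : Measurable F := by
    have hq : Measurable (Ω.indicator fun y => p y / √(U y)) := (hpm.div hUm.sqrt).indicator hΩm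
    fun_prop
  have hF : (fun x : EuclideanSpace ℝ (Fin 3) =>
      ((‖x‖ ^ 2)⁻¹ * Ω.indicator (fun y => p y / √(u y)) x) ^ 2) =ᵐ[volume] F := by
    filter_upwards [Measure.ae_ne volume 0] with x hx
    by_cases hmem : x ∈ Ω
    · simp only [F, indicator_of_mem hmem, huU x hx]
    · simp only [F, indicator_of_notMem hmem]
  have hdim : Module.finrank ℝ (EuclideanSpace ℝ (Fin 3)) - 1 = 2 := by simp
  rw [integral_congr_ae hF,
    integral_eq_lintegral_of_nonneg_ae (.of_forall fun _ => sq_nonneg _) hFm.aestronglyMeasurable,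
    integral_eq_lintegral_of_nonneg_ae (.of_forall fun _ => sq_nonneg _)
      (by fun_prop : Measurable fun φ : sphere (0 : EuclideanSpace ℝ (Fin 3)) 1 =>
        p φ ^ 2).aestronglyMeasurable,
    lintegral_eq_lintegral_toSphere_lintegral_Ioi volume hFm.ennreal_ofReal, hdim]
  congr 1
  refine lintegral_congr fun φ => ?_
  have hφ : ‖(φ : EuclideanSpace ℝ (Fin 3))‖ = 1 := norm_eq_of_mem_sphere φ
  refine lintegral_Ioi_pow_mul_sq_indicator_div_sqrt_rayTransform hφ (fun t ht => ?_) fun h0 =>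
    hsupp _ ((hu _ hφ).trans h0)
  rw [hphom t ht, hU_smul _ hφ t ht]

/-- Cone-beam isometry: `p ↦ w·𝒟^B(ũ^{-1/2}·p)` with `w(x)=|x|⁻²`,
`ũ = 𝒟(w)`, is an isometry from `L²(D)` (`D = {ũ > 0}`) to `L²(Ω)`.
Functions on the sphere are modeled as 0-homogeneous functions on `ℝ³`. -/
theorem stmt11
    (Ω : Set (EuclideanSpace ℝ (Fin 3))) (hΩm : MeasurableSet Ω) (hΩo : IsOpen Ω)
    (hΩb : Bornology.IsBounded Ω) (h0 : (0 : EuclideanSpace ℝ (Fin 3)) ∉ closure Ω)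
    (u : EuclideanSpace ℝ (Fin 3) → ℝ)
    (hu : ∀ x : EuclideanSpace ℝ (Fin 3), ‖x‖ = 1 →
      u x = ∫ t in Set.Ioi (0 : ℝ),
        Set.indicator Ω (fun y : EuclideanSpace ℝ (Fin 3) => (‖y‖ ^ 2)⁻¹) (t • x))
    (huhom : ∀ c : ℝ, 0 < c → ∀ x, u (c • x) = u x)
    (p : EuclideanSpace ℝ (Fin 3) → ℝ) (hpm : Measurable p)
    (hphom : ∀ c : ℝ, 0 < c → ∀ x, p (c • x) = p x)
    (hp2 : MemLp (fun φ : Metric.sphere (0 : EuclideanSpace ℝ (Fin 3)) 1 => p ↑φ) 2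
      ((volume : Measure (EuclideanSpace ℝ (Fin 3))).toSphere))
    (hsupp : ∀ x, u x = 0 → p x = 0) :
    (∫ x : EuclideanSpace ℝ (Fin 3),
        ((‖x‖ ^ 2)⁻¹ *
          Set.indicator Ω (fun y => p y / Real.sqrt (u y)) x) ^ 2 ∂volume)
      = ∫ φ : Metric.sphere (0 : EuclideanSpace ℝ (Fin 3)) 1, (p ↑φ) ^ 2
          ∂((volume : Measure (EuclideanSpace ℝ (Fin 3))).toSphere) :=
  stmt11_general Ω hΩm u hu huhom p hpm hphom hsupp
end
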